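/- arXiv:2406.01043 — 4 statements merged into one kernel-verified Lean document; each statement's English description precedes it below -/
import Mathlib

section
/- Let Φ : ℝ^N → ℝ satisfy (λ|A| − 1)₊ ≤ Φ(A) ≤ Λ|A| + 1 for all A ∈ ℝ^N, where 0 < λ ≤ Λ. For ε > 0 set B_ε := {A ∈ ℝ^N : (Φ + ε|·|²)**(A) = Φ(A) + ε|A|²}. Then for all 0 < ε₁ ≤ ε₂ one has B_{ε₁} ⊆ B_{ε₂}. -/
/-!
Adding a convex function `ψ` commutes with convexification up to an inequality:
every convex minorant `g` of `Φ` gives the convex minorant `g + ψ` of `Φ + ψ`, so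
`Φ** + ψ ≤ (Φ + ψ)**`. With `ψ = (ε₂ - ε₁)|·|²`, a contact point of
`Φ + ε₁|·|²` therefore has `(Φ + ε₂|·|²)** ≥ Φ + ε₂|·|²`; the reverse
inequality holds whenever some convex minorant exists. Nonnegativity of `Φ`
supplies the convex minorant `0`, which keeps the suprema away from the junk
value `sSup ∅ = 0`.
-/

/-- The convex envelope (convexification) `Φ**` of `Φ`: the pointwise supremum
of all convex functions lying below `Φ`. -/
noncomputable def convexEnvelope {N : ℕ}
    (Φ : EuclideanSpace ℝ (Fin N) → ℝ) (A : EuclideanSpace ℝ (Fin N)) : ℝ :=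
  sSup {y : ℝ | ∃ g : EuclideanSpace ℝ (Fin N) → ℝ,
    ConvexOn ℝ Set.univ g ∧ (∀ z, g z ≤ Φ z) ∧ y = g A}

open Set

lemma convexOn_univ_norm_sq {F : Type*} [SeminormedAddCommGroup F] [NormedSpace ℝ F] :
    ConvexOn ℝ univ (fun z : F => ‖z‖ ^ 2) :=
  convexOn_univ_norm.pow (fun z _ => norm_nonneg z) 2

section ConvexEnvelope

variable {N : ℕ}

local notation "E" => EuclideanSpace ℝ (Fin N)

lemma convexEnvelope_le {Φ : E → ℝ}
    (hΦ : ∃ g : E → ℝ, ConvexOn ℝ univ g ∧ ∀ z, g z ≤ Φ z) (A : E) :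
    convexEnvelope Φ A ≤ Φ A := by
  obtain ⟨g, hg, hgΦ⟩ := hΦ
  refine csSup_le ⟨g A, g, hg, hgΦ, rfl⟩ ?_
  rintro y ⟨f, -, hfΦ, rfl⟩
  exact hfΦ A

lemma convexEnvelope_add_le_convexEnvelope_add {Φ ψ : E → ℝ}
    (hΦ : ∃ g : E → ℝ, ConvexOn ℝ univ g ∧ ∀ z, g z ≤ Φ z) (hψ : ConvexOn ℝ univ ψ)
    (A : E) :
    convexEnvelope Φ A + ψ A ≤ convexEnvelope (fun B => Φ B + ψ B) A := by
  obtain ⟨g, hg, hgΦ⟩ := hΦ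
  have hbdd : BddAbove {y : ℝ | ∃ f : E → ℝ,
      ConvexOn ℝ univ f ∧ (∀ z, f z ≤ Φ z + ψ z) ∧ y = f A} := by
    refine ⟨Φ A + ψ A, ?_⟩
    rintro y ⟨f, -, hf, rfl⟩
    exact hf A
  rw [← le_sub_iff_add_le]
  refine csSup_le ⟨g A, g, hg, hgΦ, rfl⟩ ?_
  rintro y ⟨f, hf, hfΦ, rfl⟩
  rw [le_sub_iff_add_le]
  exact le_csSup hbdd ⟨fun z => f z + ψ z, hf.add hψ, fun z => add_le_add_left (hfΦ z) _, rfl⟩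

end ConvexEnvelope

theorem contactSet_monotone_general {N : ℕ} (lam : ℝ)
    (Φ : EuclideanSpace ℝ (Fin N) → ℝ)
    (hlow : ∀ A, max (lam * ‖A‖ - 1) 0 ≤ Φ A)
    (ε₁ ε₂ : ℝ) (hε₁ : 0 < ε₁) (h₁₂ : ε₁ ≤ ε₂) :
    {A : EuclideanSpace ℝ (Fin N) |
        convexEnvelope (fun B => Φ B + ε₁ * ‖B‖ ^ 2) A = Φ A + ε₁ * ‖A‖ ^ 2} ⊆
      {A : EuclideanSpace ℝ (Fin N) |
        convexEnvelope (fun B => Φ B + ε₂ * ‖B‖ ^ 2) A = Φ A + ε₂ * ‖A‖ ^ 2} := by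
  intro A hA
  have hminorant : ∀ ε, 0 ≤ ε → ∃ g : EuclideanSpace ℝ (Fin N) → ℝ,
      ConvexOn ℝ univ g ∧ ∀ z, g z ≤ Φ z + ε * ‖z‖ ^ 2 := fun ε hε =>
    ⟨0, convexOn_const 0 convex_univ, fun z =>
      add_nonneg ((le_max_right _ _).trans (hlow z)) (by positivity)⟩
  have hgap := convexEnvelope_add_le_convexEnvelope_add (hminorant ε₁ hε₁.le)
    (convexOn_univ_norm_sq.smul (sub_nonneg.2 h₁₂)) A
  have hsplit : (fun B => Φ B + ε₁ * ‖B‖ ^ 2 + (ε₂ - ε₁) * ‖B‖ ^ 2) =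
      fun B => Φ B + ε₂ * ‖B‖ ^ 2 := by
    funext B; ring
  simp only [smul_eq_mul, hsplit] at hgap
  simp only [mem_ofPred_eq] at hA ⊢
  refine le_antisymm (convexEnvelope_le (hminorant ε₂ (hε₁.le.trans h₁₂)) A) ?_
  linarith

/-- The contact sets `B_ε = {(Φ + ε|·|²)** = Φ + ε|·|²}` are monotone in `ε`:
for `0 < ε₁ ≤ ε₂` one has `B_{ε₁} ⊆ B_{ε₂}`. -/
theorem contactSet_monotone {N : ℕ} (lam Lam : ℝ)
    (hlam : 0 < lam) (hlL : lam ≤ Lam)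
    (Φ : EuclideanSpace ℝ (Fin N) → ℝ)
    (hlow : ∀ A, max (lam * ‖A‖ - 1) 0 ≤ Φ A)
    (hup : ∀ A, Φ A ≤ Lam * ‖A‖ + 1)
    (ε₁ ε₂ : ℝ) (hε₁ : 0 < ε₁) (h₁₂ : ε₁ ≤ ε₂) :
    {A : EuclideanSpace ℝ (Fin N) |
        convexEnvelope (fun B => Φ B + ε₁ * ‖B‖ ^ 2) A = Φ A + ε₁ * ‖A‖ ^ 2} ⊆
      {A : EuclideanSpace ℝ (Fin N) |
        convexEnvelope (fun B => Φ B + ε₂ * ‖B‖ ^ 2) A = Φ A + ε₂ * ‖A‖ ^ 2} :=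
  contactSet_monotone_general lam Φ hlow ε₁ ε₂ hε₁ h₁₂
end

section
/- Let Φ : ℝ^N → ℝ be continuous and satisfy (λ|A| − 1)₊ ≤ Φ(A) ≤ Λ|A| + 1 for all A ∈ ℝ^N, where 0 < λ ≤ Λ. Define B := {A ∈ ℝ^N : Φ**(A) = Φ(A)} and, for ε > 0, B_ε := {A ∈ ℝ^N : (Φ + ε|·|²)**(A) = Φ(A) + ε|A|²}. Then ⋂_{ε>0} B_ε = B. -/
/-- The set of values of finite convex combinations of values of `f` at points averaging to `A`. -/
def combosSet {N : ℕ} (f : EuclideanSpace ℝ (Fin N) → ℝ) (A : EuclideanSpace ℝ (Fin N)) : Set ℝ :=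
  {y : ℝ | ∃ n : ℕ, ∃ w : Fin n → ℝ, ∃ p : Fin n → EuclideanSpace ℝ (Fin N),
    (∀ i, 0 ≤ w i) ∧ (∑ i, w i = 1) ∧ (∑ i, w i • p i = A) ∧ y = ∑ i, w i * f (p i)}

lemma self_mem_combosSet {N : ℕ} (f : EuclideanSpace ℝ (Fin N) → ℝ) (A : EuclideanSpace ℝ (Fin N)) :
    f A ∈ combosSet f A :=
  ⟨1, fun _ => 1, fun _ => A, fun _ => zero_le_one, by simp, by simp, by simp⟩

lemma combosSet_nonneg {N : ℕ} {f : EuclideanSpace ℝ (Fin N) → ℝ} (hf : ∀ z, 0 ≤ f z)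
    {A : EuclideanSpace ℝ (Fin N)} : ∀ y ∈ combosSet f A, 0 ≤ y := by
  rintro y ⟨n, w, p, hw, -, -, rfl⟩
  exact Finset.sum_nonneg fun i _ => mul_nonneg (hw i) (hf _)

lemma combosSet_add {N : ℕ} {f : EuclideanSpace ℝ (Fin N) → ℝ} {x y : EuclideanSpace ℝ (Fin N)}
    {a b u v : ℝ} (ha : 0 ≤ a) (hb : 0 ≤ b) (hab : a + b = 1)
    (hu : u ∈ combosSet f x) (hv : v ∈ combosSet f y) :
    a * u + b * v ∈ combosSet f (a • x + b • y) := by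
  obtain ⟨n, w, p, hw, hsum, hbar, rfl⟩ := hu
  obtain ⟨m, w', p', hw', hsum', hbar', rfl⟩ := hv
  refine ⟨n + m, Fin.append (fun i => a * w i) (fun j => b * w' j), Fin.append p p',
    ?_, ?_, ?_, ?_⟩
  · intro i
    refine Fin.addCases (fun i => ?_) (fun i => ?_) i
    · rw [Fin.append_left]; exact mul_nonneg ha (hw i)
    · rw [Fin.append_right]; exact mul_nonneg hb (hw' i)
  · rw [Fin.sum_univ_add]
    simp only [Fin.append_left, Fin.append_right, ← Finset.mul_sum, hsum, hsum']
    linarith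
  · rw [Fin.sum_univ_add]
    simp only [Fin.append_left, Fin.append_right, mul_smul, ← Finset.smul_sum, hbar, hbar']
  · rw [Fin.sum_univ_add]
    simp only [Fin.append_left, Fin.append_right, mul_assoc, ← Finset.mul_sum]

lemma convexOn_combosInf {N : ℕ} {f : EuclideanSpace ℝ (Fin N) → ℝ} (hf : ∀ z, 0 ≤ f z) :
    ConvexOn ℝ Set.univ (fun A => sInf (combosSet f A)) := by
  refine ⟨convex_univ, fun x _ y _ a b ha hb hab => ?_⟩
  have hUne : (combosSet f x).Nonempty := ⟨f x, self_mem_combosSet f x⟩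
  have hVne : (combosSet f y).Nonempty := ⟨f y, self_mem_combosSet f y⟩
  have hUbd : BddBelow (combosSet f x) := ⟨0, fun u hu => combosSet_nonneg hf u hu⟩
  have hVbd : BddBelow (combosSet f y) := ⟨0, fun v hv => combosSet_nonneg hf v hv⟩
  have hCbd : BddBelow (combosSet f (a • x + b • y)) :=
    ⟨0, fun c hc => combosSet_nonneg hf c hc⟩
  have key : ∀ u ∈ combosSet f x, ∀ v ∈ combosSet f y,
      sInf (combosSet f (a • x + b • y)) ≤ a * u + b * v := fun u hu v hv =>
    csInf_le hCbd (combosSet_add ha hb hab hu hv)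
  simp only [smul_eq_mul]
  rcases eq_or_lt_of_le ha with rfl | ha'
  · have hb1 : b = 1 := by linarith
    subst hb1
    simp only [zero_smul, one_smul, zero_add, zero_mul, one_mul]
    exact le_refl _
  rcases eq_or_lt_of_le hb with rfl | hb'
  · have ha1 : a = 1 := by linarith
    subst ha1
    simp only [zero_smul, one_smul, add_zero, zero_mul, one_mul]
    exact le_refl _
  have step1 : ∀ u ∈ combosSet f x,
      sInf (combosSet f (a • x + b • y)) ≤ a * u + b * sInf (combosSet f y) := by
    intro u hu
    have : (sInf (combosSet f (a • x + b • y)) - a * u) / b ≤ sInf (combosSet f y) := by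
      refine le_csInf hVne fun v hv => ?_
      rw [div_le_iff₀ hb']
      have := key u hu v hv
      nlinarith
    rw [div_le_iff₀ hb'] at this
    linarith
  have : (sInf (combosSet f (a • x + b • y)) - b * sInf (combosSet f y)) / a
      ≤ sInf (combosSet f x) := by
    refine le_csInf hUne fun u hu => ?_
    rw [div_le_iff₀ ha']
    have := step1 u hu
    nlinarith
  rw [div_le_iff₀ ha'] at this
  linarith

lemma convexOn_normSq {N : ℕ} :
    ConvexOn ℝ Set.univ (fun x : EuclideanSpace ℝ (Fin N) => ‖x‖ ^ 2) := by
  refine ⟨convex_univ, fun x _ y _ a b ha hb hab => ?_⟩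
  have h1 : ‖a • x + b • y‖ ≤ a * ‖x‖ + b * ‖y‖ := by
    calc ‖a • x + b • y‖ ≤ ‖a • x‖ + ‖b • y‖ := norm_add_le _ _
    _ = a * ‖x‖ + b * ‖y‖ := by rw [norm_smul, norm_smul, Real.norm_of_nonneg ha,
        Real.norm_of_nonneg hb]
  have h2 : (0:ℝ) ≤ ‖a • x + b • y‖ := norm_nonneg _
  have hx : (0:ℝ) ≤ ‖x‖ := norm_nonneg _
  have hy : (0:ℝ) ≤ ‖y‖ := norm_nonneg _
  simp only [smul_eq_mul]
  nlinarith [sq_nonneg (‖x‖ - ‖y‖), mul_nonneg ha hb]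

lemma envelope_le {N : ℕ} {f : EuclideanSpace ℝ (Fin N) → ℝ} (hf : ∀ z, 0 ≤ f z)
    (A : EuclideanSpace ℝ (Fin N)) : convexEnvelope f A ≤ f A := by
  refine Real.sSup_le ?_ (hf A)
  rintro y ⟨g, hgc, hgle, rfl⟩
  exact hgle A

lemma le_envelope {N : ℕ} {f g : EuclideanSpace ℝ (Fin N) → ℝ}
    (hgc : ConvexOn ℝ Set.univ g) (hgle : ∀ z, g z ≤ f z)
    (A : EuclideanSpace ℝ (Fin N)) : g A ≤ convexEnvelope f A :=
  le_csSup ⟨f A, by rintro y ⟨g', hg'c, hg'le, rfl⟩; exact hg'le A⟩ ⟨g, hgc, hgle, rfl⟩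

lemma envelope_le_combo {N : ℕ} {f : EuclideanSpace ℝ (Fin N) → ℝ} (hf : ∀ z, 0 ≤ f z)
    {A : EuclideanSpace ℝ (Fin N)} {n : ℕ} {w : Fin n → ℝ} {p : Fin n → EuclideanSpace ℝ (Fin N)}
    (hw : ∀ i, 0 ≤ w i) (hsum : ∑ i, w i = 1) (hbar : ∑ i, w i • p i = A) :
    convexEnvelope f A ≤ ∑ i, w i * f (p i) := by
  refine Real.sSup_le ?_ (Finset.sum_nonneg fun i _ => mul_nonneg (hw i) (hf _))
  rintro y ⟨g, hgc, hgle, rfl⟩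
  calc g A = g (∑ i, w i • p i) := by rw [hbar]
  _ ≤ ∑ i, w i • g (p i) :=
      hgc.map_sum_le (fun i _ => hw i) hsum (fun i _ => Set.mem_univ _)
  _ ≤ ∑ i, w i * f (p i) := by
      refine Finset.sum_le_sum fun i _ => ?_
      simpa [smul_eq_mul] using mul_le_mul_of_nonneg_left (hgle (p i)) (hw i)

lemma convexOn_normSq_smul {N : ℕ} {ε : ℝ} (hε : 0 ≤ ε) :
    ConvexOn ℝ Set.univ (fun z : EuclideanSpace ℝ (Fin N) => ε * ‖z‖ ^ 2) := by
  have := (convexOn_normSq (N := N)).smul hε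
  simpa [Pi.smul_def, smul_eq_mul] using this

/-- For a continuous `Φ` with linear growth, the intersection over all `ε > 0`
of the contact sets `B_ε = {(Φ + ε|·|²)** = Φ + ε|·|²}` equals the contact set
`B = {Φ** = Φ}`. -/
theorem iInter_contactSet_eq {N : ℕ} (lam Lam : ℝ)
    (hlam : 0 < lam) (hlL : lam ≤ Lam)
    (Φ : EuclideanSpace ℝ (Fin N) → ℝ) (hcont : Continuous Φ)
    (hlow : ∀ A, max (lam * ‖A‖ - 1) 0 ≤ Φ A)
    (hup : ∀ A, Φ A ≤ Lam * ‖A‖ + 1) :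
    (⋂ ε > (0 : ℝ),
        {A : EuclideanSpace ℝ (Fin N) |
          convexEnvelope (fun B => Φ B + ε * ‖B‖ ^ 2) A = Φ A + ε * ‖A‖ ^ 2}) =
      {A : EuclideanSpace ℝ (Fin N) | convexEnvelope Φ A = Φ A} := by

  have hΦ0 : ∀ A, 0 ≤ Φ A := fun A => le_trans (le_max_right _ _) (hlow A)
  ext A
  simp only [Set.mem_iInter, Set.mem_setOf_eq]
  constructor
  · intro h
    have hcombo : ∀ y ∈ combosSet Φ A, Φ A ≤ y := by
      rintro y ⟨n, w, p, hw, hsum, hbar, rfl⟩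
      by_contra hlt
      push_neg at hlt
      set S := ∑ i, w i * Φ (p i) with hS
      set K := ∑ i, w i * ‖p i‖ ^ 2 with hK
      have hK0 : 0 ≤ K := Finset.sum_nonneg fun i _ => mul_nonneg (hw i) (by positivity)
      set ε := (Φ A - S) / (2 * (K + 1)) with hε
      have hεpos : 0 < ε := by
        apply div_pos
        · linarith
        · nlinarith
      have h1 := h ε hεpos
      have hfε0 : ∀ z, 0 ≤ Φ z + ε * ‖z‖ ^ 2 := fun z => add_nonneg (hΦ0 z) (by positivity)
      have h2 : convexEnvelope (fun B => Φ B + ε * ‖B‖ ^ 2) A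
          ≤ ∑ i, w i * (Φ (p i) + ε * ‖p i‖ ^ 2) :=
        envelope_le_combo hfε0 hw hsum hbar
      rw [h1] at h2
      have h3 : ∑ i, w i * (Φ (p i) + ε * ‖p i‖ ^ 2) = S + ε * K := by
        simp only [mul_add]
        rw [Finset.sum_add_distrib]
        congr 1
        rw [hK, Finset.mul_sum]
        exact Finset.sum_congr rfl fun i _ => by ring
      rw [h3] at h2
      have hA2 : (0:ℝ) ≤ ‖A‖ ^ 2 := by positivity
      have hεval : ε * (2 * (K + 1)) = Φ A - S := by
        rw [hε]
        field_simp
      nlinarith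
    have hcle : ∀ z, sInf (combosSet Φ z) ≤ Φ z := fun z =>
      csInf_le ⟨0, fun y hy => combosSet_nonneg hΦ0 y hy⟩ (self_mem_combosSet Φ z)
    have hge : Φ A ≤ sInf (combosSet Φ A) :=
      le_csInf ⟨Φ A, self_mem_combosSet Φ A⟩ hcombo
    have h4 := le_envelope (convexOn_combosInf hΦ0) hcle A
    have h5 := envelope_le hΦ0 A
    have h6 := hcle A
    linarith
  · intro h ε hε
    have hfε0 : ∀ z, 0 ≤ Φ z + ε * ‖z‖ ^ 2 := fun z => add_nonneg (hΦ0 z) (by positivity)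
    have hle : convexEnvelope (fun B => Φ B + ε * ‖B‖ ^ 2) A ≤ Φ A + ε * ‖A‖ ^ 2 :=
      envelope_le hfε0 A
    have hsq := convexOn_normSq_smul (N := N) hε.le
    have hq_le : ∀ z : EuclideanSpace ℝ (Fin N), ε * ‖z‖ ^ 2 ≤ Φ z + ε * ‖z‖ ^ 2 := fun z => by
      linarith [hΦ0 z]
    have hlb : ε * ‖A‖ ^ 2 ≤ convexEnvelope (fun B => Φ B + ε * ‖B‖ ^ 2) A :=
      le_envelope hsq hq_le A
    have hkey : convexEnvelope Φ A
        ≤ convexEnvelope (fun B => Φ B + ε * ‖B‖ ^ 2) A - ε * ‖A‖ ^ 2 := by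
      refine Real.sSup_le ?_ (by linarith)
      rintro y ⟨g, hgc, hgle, rfl⟩
      have hg'c : ConvexOn ℝ Set.univ (fun z => g z + ε * ‖z‖ ^ 2) := hgc.add hsq
      have hg'le : ∀ z, g z + ε * ‖z‖ ^ 2 ≤ Φ z + ε * ‖z‖ ^ 2 := fun z => by
        linarith [hgle z]
      have := le_envelope hg'c hg'le A
      linarith
    rw [h] at hkey
    linarith
end

section
/- Let Φ : ℝ^N → ℝ satisfy (λ|A| − 1)₊ ≤ Φ(A) ≤ Λ|A| + 1 for all A ∈ ℝ^N, where 0 < λ ≤ Λ. Assume Φ is differentiable on ℝ^N with q := ∇Φ satisfying |q(A)| ≤ Λ for all A, and that the convexification Φ** is differentiable on ℝ^N. Let ν be a Borel probability measure on ℝ^N concentrated on the contact set B := {A ∈ ℝ^N : Φ**(A) = Φ(A)} (i.e. ν(ℝ^N ∖ B) = 0) and with finite first moment ∫ |A| dν(A) < ∞. Then ∫ q(A) · A dν(A) ≥ (∫ q(A) dν(A)) · (∫ A dν(A)). -/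
/-! Since `Φ** ≤ Φ` with equality on the contact set, `Φ - Φ**` is minimal at each contact point,
so `q = ∇Φ**` holds `ν`-a.e. The gradient of the convex function `Φ**` is a monotone map; with
`m = ∫ A dν` this gives `(q(A) - ∇Φ**(m)) · (A - m) ≥ 0` `ν`-a.e., and integrating, the term
`∇Φ**(m) · ∫ (A - m) dν` vanishes, leaving `∫ q(A) · A dν - (∫ q dν) · m ≥ 0`. -/

open MeasureTheory

open Set InnerProductSpace Topology

section Gradient

variable {E : Type*} [NormedAddCommGroup E] [InnerProductSpace ℝ E] [CompleteSpace E]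

theorem ConvexOn.add_inner_sub_le_of_hasGradientAt {s : Set E} {f : E → ℝ} (hf : ConvexOn ℝ s f)
    {x y g : E} (hx : x ∈ s) (hy : y ∈ s) (hg : HasGradientAt f g x) :
    f x + ⟪g, y - x⟫_ℝ ≤ f y := by
  have hφ := hf.comp_affineMap (AffineMap.lineMap (k := ℝ) x y)
  have hφ' : HasDerivAt (f ∘ AffineMap.lineMap (k := ℝ) x y) ⟪g, y - x⟫_ℝ 0 := by
    rw [← AffineMap.lineMap_apply_zero (k := ℝ) x y] at hg
    exact hg.hasFDerivAt.comp_hasDerivAt (0 : ℝ) AffineMap.hasDerivAt_lineMap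
  have := hφ.le_slope_of_hasDerivAt (by simpa) (by simpa) one_pos hφ'
  simp only [slope_def_field, Function.comp_apply, AffineMap.lineMap_apply_one,
    AffineMap.lineMap_apply_zero, sub_zero, div_one] at this
  linarith

theorem ConvexOn.inner_sub_nonneg_of_hasGradientAt {s : Set E} {f : E → ℝ}
    (hf : ConvexOn ℝ s f) {x y gx gy : E} (hx : x ∈ s) (hy : y ∈ s)
    (hgx : HasGradientAt f gx x) (hgy : HasGradientAt f gy y) :
    0 ≤ ⟪gx - gy, x - y⟫_ℝ := by
  have h₁ := hf.add_inner_sub_le_of_hasGradientAt hx hy hgx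
  have h₂ := hf.add_inner_sub_le_of_hasGradientAt hy hx hgy
  rw [← neg_sub x y, inner_neg_right] at h₁
  rw [inner_sub_left]
  linarith

theorem HasGradientAt.eq_of_eventually_le_of_eq {f g : E → ℝ} {a b x : E}
    (hf : HasGradientAt f a x) (hg : HasGradientAt g b x) (hle : ∀ᶠ z in 𝓝 x, g z ≤ f z)
    (heq : g x = f x) : b = a := by
  have hmin : IsLocalMin (fun z => f z - g z) x := by
    filter_upwards [hle] with z hz
    linarith
  have := hmin.hasFDerivAt_eq_zero (hf.hasFDerivAt.sub hg.hasFDerivAt)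
  rw [← map_sub, LinearIsometryEquiv.map_eq_zero_iff, sub_eq_zero] at this
  exact this.symm

theorem measurable_gradient [MeasurableSpace E] [BorelSpace E] (f : E → ℝ) :
    Measurable (gradient f) :=
  (toDual ℝ E).symm.continuous.measurable.comp (measurable_fderiv ℝ f)

end Gradient

section ConvexEnvelope

variable {N : ℕ} {Φ : EuclideanSpace ℝ (Fin N) → ℝ}

theorem le_convexEnvelope {g : EuclideanSpace ℝ (Fin N) → ℝ} (hg : ConvexOn ℝ univ g)
    (hgΦ : ∀ z, g z ≤ Φ z) (A : EuclideanSpace ℝ (Fin N)) : g A ≤ convexEnvelope Φ A :=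
  le_csSup ⟨Φ A, by rintro _ ⟨g', -, hg'Φ, rfl⟩; exact hg'Φ A⟩ ⟨g, hg, hgΦ, rfl⟩

-- Without a convex minorant the defining set is empty and `sSup ∅ = 0` is a junk value.
variable (hΦ : ∃ g, ConvexOn ℝ univ g ∧ ∀ z, g z ≤ Φ z)
include hΦ

theorem convexEnvelope_le_s9 (A : EuclideanSpace ℝ (Fin N)) : convexEnvelope Φ A ≤ Φ A := by
  obtain ⟨g, hg, hgΦ⟩ := hΦ
  exact csSup_le ⟨g A, g, hg, hgΦ, rfl⟩ (by rintro _ ⟨g', -, hg'Φ, rfl⟩; exact hg'Φ A)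

theorem convexOn_convexEnvelope : ConvexOn ℝ univ (convexEnvelope Φ) := by
  obtain ⟨g, hg, hgΦ⟩ := hΦ
  refine ⟨convex_univ, fun x _ y _ a b ha hb hab => ?_⟩
  refine csSup_le ⟨g _, g, hg, hgΦ, rfl⟩ ?_
  rintro _ ⟨g', hg', hg'Φ, rfl⟩
  calc g' (a • x + b • y) ≤ a • g' x + b • g' y := hg'.2 (mem_univ x) (mem_univ y) ha hb hab
    _ ≤ a • convexEnvelope Φ x + b • convexEnvelope Φ y := by
      gcongr <;> exact le_convexEnvelope hg' hg'Φ _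

end ConvexEnvelope

section Covariance

variable {E : Type*} [NormedAddCommGroup E] [InnerProductSpace ℝ E]

theorem MeasureTheory.Integrable.bdd_inner {α : Type*} [MeasurableSpace α] {μ : Measure α}
    {f g : α → E} {C : ℝ} (hg : Integrable g μ) (hf : AEStronglyMeasurable f μ)
    (hfC : ∀ a, ‖f a‖ ≤ C) :
    Integrable (fun a => ⟪f a, g a⟫_ℝ) μ := by
  refine (hg.norm.const_mul C).mono' (hf.inner hg.aestronglyMeasurable) (.of_forall fun a => ?_)
  calc ‖⟪f a, g a⟫_ℝ‖ ≤ ‖f a‖ * ‖g a‖ := norm_inner_le_norm _ _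
    _ ≤ C * ‖g a‖ := by gcongr; exact hfC a

theorem inner_integral_le_integral_inner [CompleteSpace E] [MeasurableSpace E] {ν : Measure E}
    [IsProbabilityMeasure ν] {q : E → E} {v : E}
    (hq : Integrable q ν) (hqA : Integrable (fun A => ⟪q A, A⟫_ℝ) ν)
    (hA : Integrable (fun A => A) ν) (hv : ∀ᵐ A ∂ν, 0 ≤ ⟪q A - v, A - ∫ A, A ∂ν⟫_ℝ) :
    ⟪∫ A, q A ∂ν, ∫ A, A ∂ν⟫_ℝ ≤ ∫ A, ⟪q A, A⟫_ℝ ∂ν := by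
  set m := ∫ A, A ∂ν
  have hcentered : ∫ A, ⟪v, A - m⟫_ℝ ∂ν = 0 := by
    rw [integral_inner (hA.sub' (integrable_const m)), integral_sub hA (integrable_const m)]
    simp [m]
  have hqm : Integrable (fun A => ⟪m, q A⟫_ℝ) ν := hq.const_inner m
  have hvA : Integrable (fun A => ⟪v, A - m⟫_ℝ) ν := (hA.sub' (integrable_const m)).const_inner v
  calc ⟪∫ A, q A ∂ν, m⟫_ℝ ≤ ⟪∫ A, q A ∂ν, m⟫_ℝ + ∫ A, ⟪q A - v, A - m⟫_ℝ ∂ν :=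
        le_add_of_nonneg_right (integral_nonneg_of_ae hv)
    _ = ⟪∫ A, q A ∂ν, m⟫_ℝ + ∫ A, (⟪q A, A⟫_ℝ - ⟪m, q A⟫_ℝ - ⟪v, A - m⟫_ℝ) ∂ν := by
      congr 2 with A
      rw [inner_sub_left, inner_sub_right, real_inner_comm m]
    _ = ∫ A, ⟪q A, A⟫_ℝ ∂ν := by
      rw [integral_sub (hqA.sub' hqm) hvA, integral_sub hqA hqm, hcentered, integral_inner hq,
        real_inner_comm]
      ring

end Covariance

theorem integral_inner_ge_inner_integrals_general {N : ℕ} (lam Lam : ℝ)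
    (Φ : EuclideanSpace ℝ (Fin N) → ℝ)
    (hlow : ∀ A, max (lam * ‖A‖ - 1) 0 ≤ Φ A)
    (q p : EuclideanSpace ℝ (Fin N) → EuclideanSpace ℝ (Fin N))
    (hq : ∀ x, HasGradientAt Φ (q x) x)
    (hqb : ∀ A, ‖q A‖ ≤ Lam)
    (hp : ∀ x, HasGradientAt (convexEnvelope Φ) (p x) x)
    (ν : Measure (EuclideanSpace ℝ (Fin N))) [IsProbabilityMeasure ν]
    (hconc : ν {A : EuclideanSpace ℝ (Fin N) | convexEnvelope Φ A = Φ A}ᶜ = 0)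
    (hmom : Integrable (fun A : EuclideanSpace ℝ (Fin N) => ‖A‖) ν) :
    (inner ℝ (∫ A, q A ∂ν) (∫ A, A ∂ν) : ℝ) ≤
      ∫ A, (inner ℝ (q A) A : ℝ) ∂ν := by
  have hΦ : ∃ g, ConvexOn ℝ univ g ∧ ∀ z, g z ≤ Φ z :=
    ⟨0, convexOn_const 0 convex_univ, fun z => (le_max_right _ _).trans (hlow z)⟩
  have hqp : ∀ᵐ A ∂ν, q A = p A := by
    filter_upwards [mem_ae_iff.mpr hconc] with A hA
    exact ((hq A).eq_of_eventually_le_of_eq (hp A) (.of_forall (convexEnvelope_le_s9 hΦ)) hA).symm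
  have hq_meas : AEStronglyMeasurable q ν :=
    (gradient_eq hq ▸ measurable_gradient Φ).aestronglyMeasurable
  have hA : Integrable (fun A => A) ν := (integrable_norm_iff aestronglyMeasurable_id).mp hmom
  refine inner_integral_le_integral_inner (v := p (∫ A, A ∂ν))
    (.of_bound hq_meas Lam (.of_forall hqb)) (hA.bdd_inner hq_meas hqb) hA ?_
  filter_upwards [hqp] with A hqpA
  rw [hqpA]
  exact (convexOn_convexEnvelope hΦ).inner_sub_nonneg_of_hasGradientAt (mem_univ _)
    (mem_univ _) (hp A) (hp _)

/-- **Independence inequality.** For a probability measure `ν` concentrated on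
the contact set `B = {Φ** = Φ}` with finite first moment,
`∫ q(A)·A dν ≥ (∫ q dν) · (∫ A dν)`, where `q = ∇Φ`. -/
theorem integral_inner_ge_inner_integrals {N : ℕ} (lam Lam : ℝ)
    (hlam : 0 < lam) (hlL : lam ≤ Lam)
    (Φ : EuclideanSpace ℝ (Fin N) → ℝ)
    (hlow : ∀ A, max (lam * ‖A‖ - 1) 0 ≤ Φ A)
    (hup : ∀ A, Φ A ≤ Lam * ‖A‖ + 1)
    (q p : EuclideanSpace ℝ (Fin N) → EuclideanSpace ℝ (Fin N))
    (hq : ∀ x, HasGradientAt Φ (q x) x)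
    (hqb : ∀ A, ‖q A‖ ≤ Lam)
    (hp : ∀ x, HasGradientAt (convexEnvelope Φ) (p x) x)
    (ν : Measure (EuclideanSpace ℝ (Fin N))) [IsProbabilityMeasure ν]
    (hconc : ν {A : EuclideanSpace ℝ (Fin N) | convexEnvelope Φ A = Φ A}ᶜ = 0)
    (hmom : Integrable (fun A : EuclideanSpace ℝ (Fin N) => ‖A‖) ν) :
    (inner ℝ (∫ A, q A ∂ν) (∫ A, A ∂ν) : ℝ) ≤
      ∫ A, (inner ℝ (q A) A : ℝ) ∂ν :=
  integral_inner_ge_inner_integrals_general lam Lam Φ hlow q p hq hqb hp ν hconc hmom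
end

section
/- Let Φ : ℝ^N → ℝ be continuously differentiable and satisfy (λ|A| − 1)₊ ≤ Φ(A) ≤ Λ|A| + 1 for all A ∈ ℝ^N, where 0 < λ ≤ Λ. Then the convexification Φ** is convex and continuously differentiable on ℝ^N. -/
open Set Filter Topology

section Subgradient

variable {E : Type*} [NormedAddCommGroup E] [NormedSpace ℝ E]

def HasSubgradientAt (f : E → ℝ) (l : E →L[ℝ] ℝ) (x : E) : Prop :=
  ∀ y, f x + l (y - x) ≤ f y

variable {f φ : E → ℝ} {l l' : E →L[ℝ] ℝ} {x y : E}

namespace HasSubgradientAt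

theorem smul_add_smul (hl : HasSubgradientAt f l x) (hl' : HasSubgradientAt f l' x) {a b : ℝ}
    (ha : 0 ≤ a) (hb : 0 ≤ b) (hab : a + b = 1) : HasSubgradientAt f (a • l + b • l') x := by
  intro y
  have h := mul_le_mul_of_nonneg_left (hl y) ha
  have h' := mul_le_mul_of_nonneg_left (hl' y) hb
  simp only [add_apply, smul_apply, smul_eq_mul]
  linear_combination h + h' + (f y - f x) * hab

theorem of_apply_eq (hl : HasSubgradientAt f l x) (hy : f y = f x + l (y - x)) :
    HasSubgradientAt f l y := fun z => by
  have := hl z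
  rw [hy, add_assoc, ← map_add, sub_add_sub_cancel']
  exact this

theorem norm_le {C : ℝ} (hl : HasSubgradientAt f l x)
    (hC : ∀ z ∈ Metric.closedBall x 1, ‖f z‖ ≤ C) : ‖l‖ ≤ 2 * C := by
  have hx := hC x (Metric.mem_closedBall_self zero_le_one)
  have hle : ∀ h, ‖h‖ = 1 → l h ≤ 2 * C := fun h hh => by
    have hxh := hC (x + h) (by simp [hh])
    have := hl (x + h)
    rw [add_sub_cancel_left] at this
    rw [Real.norm_eq_abs, abs_le] at hx hxh
    linarith
  refine ContinuousLinearMap.opNorm_le_of_unit_norm (by linarith [norm_nonneg (f x)]) fun h hh => ?_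
  have := hle (-h) (by rw [norm_neg, hh])
  rw [map_neg] at this
  exact abs_le.2 ⟨by linarith, hle h hh⟩

theorem of_tendsto {ι : Type*} {F : Filter ι} [F.NeBot] (hf : ContinuousAt f x) {u : ι → E}
    {L : ι → E →L[ℝ] ℝ} (hu : Tendsto u F (𝓝 x)) (hL : Tendsto L F (𝓝 l))
    (h : ∀ i, HasSubgradientAt f (L i) (u i)) : HasSubgradientAt f l x := fun y =>
  le_of_tendsto' ((hf.tendsto.comp hu).add
    ((isBoundedBilinearMap_apply.continuous.tendsto _).comp
      (hL.prodMk_nhds (tendsto_const_nhds.sub hu)))) fun i => h i y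

theorem eq_fderiv_of_le (hl : HasSubgradientAt f l y) (hle : ∀ z, f z ≤ φ z) (heq : f y = φ y)
    (hφ : DifferentiableAt ℝ φ y) : l = fderiv ℝ φ y := by
  have hmin : IsLocalMin (fun z => φ z - l z) y := Eventually.of_forall fun z => by
    have := hl z
    rw [map_sub] at this
    linarith [hle z]
  exact (sub_eq_zero.1 (hmin.hasFDerivAt_eq_zero (hφ.hasFDerivAt.sub l.hasFDerivAt))).symm

end HasSubgradientAt

theorem ConvexOn.exists_hasSubgradientAt (hf : ConvexOn ℝ univ f) (hc : Continuous f) (x : E) :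
    ∃ l, HasSubgradientAt f l x := by
  have hopen : IsOpen {p : E × ℝ | p.1 ∈ univ ∧ f p.1 < p.2} := by
    simpa using isOpen_lt (hc.comp continuous_fst) continuous_snd
  obtain ⟨Ψ, hΨ⟩ := geometric_hahn_banach_open_point hf.convex_strict_epigraph hopen
    (by simp : (x, f x) ∉ {p : E × ℝ | p.1 ∈ univ ∧ f p.1 < p.2})
  set M := Ψ.comp (ContinuousLinearMap.inl ℝ E ℝ)
  set β := Ψ (0, 1)
  have hΨ_apply : ∀ z t, Ψ (z, t) = M z + t * β := fun z t => by
    rw [show ((z, t) : E × ℝ) = (z, 0) + t • ((0 : E), (1 : ℝ)) by simp, map_add, map_smul]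
    simp [M, β]
  have key : ∀ z t, f z < t → M z + t * β < M x + f x * β := fun z t ht => by
    simpa only [hΨ_apply] using hΨ (z, t) ⟨mem_univ z, ht⟩
  have hβ : 0 < -β := by linarith [key x (f x + 1) (by linarith)]
  refine ⟨(-β)⁻¹ • M, fun z => ?_⟩
  -- letting `t ↓ f z` in `key z t`
  have hle : M z + f z * β ≤ M x + f x * β :=
    le_of_tendsto (x := 𝓝[>] (f z))
      ((Continuous.tendsto (by fun_prop) (f z)).mono_left nhdsWithin_le_nhds)
      (eventually_nhdsWithin_of_forall fun t (ht : f z < t) => (key z t ht).le)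
  have : (-β)⁻¹ * (M z - M x) ≤ f z - f x := by
    rw [inv_mul_le_iff₀ hβ]
    linarith
  simp only [smul_apply, map_sub, smul_eq_mul]
  linarith

theorem hasFDerivAt_of_hasSubgradientAt {g : E → E →L[ℝ] ℝ}
    (hg : ∀ y, HasSubgradientAt f (g y) y) (hgx : ContinuousAt g x) : HasFDerivAt f (g x) x := by
  rw [hasFDerivAt_iff_isLittleO_nhds_zero, Asymptotics.isLittleO_iff]
  intro c hc
  have hlim : Tendsto (fun h => g (x + h)) (𝓝 0) (𝓝 (g x)) :=
    hgx.tendsto.comp (Continuous.tendsto' (by fun_prop) 0 x (add_zero x))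
  filter_upwards [hlim.eventually (Metric.closedBall_mem_nhds _ hc)] with h hh
  have lower := hg x (x + h)
  have upper := hg (x + h) x
  rw [add_sub_cancel_left] at lower
  rw [sub_add_cancel_left, map_neg] at upper
  have hgh : (g (x + h) - g x) h ≤ c * ‖h‖ :=
    (le_abs_self _).trans <| ((g (x + h) - g x).le_opNorm h).trans <|
      mul_le_mul_of_nonneg_right (by rwa [← dist_eq_norm]) (norm_nonneg h)
  rw [sub_apply] at hgh
  rw [Real.norm_eq_abs, abs_le]
  constructor <;> nlinarith [norm_nonneg h]

variable [FiniteDimensional ℝ E]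

theorem continuous_of_hasSubgradientAt_unique (hf : Continuous f) {g : E → E →L[ℝ] ℝ}
    (hg : ∀ x, HasSubgradientAt f (g x) x) (huniq : ∀ x l, HasSubgradientAt f l x → l = g x) :
    Continuous g := by
  refine continuous_iff_continuousAt.2 fun x => ?_
  obtain ⟨C, hC⟩ := (isCompact_closedBall x 2).exists_bound_of_continuousOn hf.continuousOn
  have hbound : ∀ᶠ y in 𝓝 x, g y ∈ Metric.closedBall 0 (2 * C) :=
    eventually_of_mem (Metric.closedBall_mem_nhds x one_pos) fun y hy =>
      mem_closedBall_zero_iff.2 <| (hg y).norm_le fun z hz =>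
        hC z (Metric.closedBall_subset_closedBall' (by linarith [Metric.mem_closedBall.1 hy]) hz)
  refine (isCompact_closedBall 0 (2 * C)).tendsto_nhds_of_unique_mapClusterPt hbound
    fun l _ hl => ?_
  obtain ⟨U, hU, hgU⟩ := mapClusterPt_iff_ultrafilter.1 hl
  exact huniq x l (.of_tendsto hf.continuousAt hU hgU hg)

theorem ConvexOn.contDiff_one_of_hasSubgradientAt_unique (hf : ConvexOn ℝ univ f)
    (huniq : ∀ x l l', HasSubgradientAt f l x → HasSubgradientAt f l' x → l = l') :
    ContDiff ℝ 1 f := by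
  have hc : Continuous f := continuousOn_univ.1 (hf.continuousOn isOpen_univ)
  choose g hg using hf.exists_hasSubgradientAt hc
  have hgc := continuous_of_hasSubgradientAt_unique hc hg fun x l hl => huniq x l (g x) hl (hg x)
  exact contDiff_one_iff_hasFDerivAt.2
    ⟨g, hgc, fun x => hasFDerivAt_of_hasSubgradientAt hg hgc.continuousAt⟩

end Subgradient

section ConvexCombination

variable {E : Type*} [AddCommGroup E] [Module ℝ E] {Φ g : E → ℝ} {A B : E}

def convexCombValues (Φ : E → ℝ) (A : E) : Set ℝ :=
  {y | ∃ (n : ℕ) (t : Fin n → ℝ) (x : Fin n → E), (∀ i, 0 ≤ t i) ∧ ∑ i, t i = 1 ∧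
    ∑ i, t i • x i = A ∧ y = ∑ i, t i * Φ (x i)}

noncomputable def convexCombInf (Φ : E → ℝ) (A : E) : ℝ :=
  sInf (convexCombValues Φ A)

theorem apply_mem_convexCombValues (Φ : E → ℝ) (A : E) : Φ A ∈ convexCombValues Φ A :=
  ⟨1, fun _ => 1, fun _ => A, fun _ => zero_le_one, by simp, by simp, by simp⟩

theorem smul_add_smul_mem_convexCombValues {y z a b : ℝ} (hy : y ∈ convexCombValues Φ A)
    (hz : z ∈ convexCombValues Φ B) (ha : 0 ≤ a) (hb : 0 ≤ b) (hab : a + b = 1) :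
    a * y + b * z ∈ convexCombValues Φ (a • A + b • B) := by
  obtain ⟨n, t, x, ht0, ht1, rfl, rfl⟩ := hy
  obtain ⟨m, s, w, hs0, hs1, rfl, rfl⟩ := hz
  refine ⟨n + m, Fin.append (fun i => a * t i) (fun j => b * s j), Fin.append x w,
    fun i => ?_, ?_, ?_, ?_⟩
  · induction i using Fin.addCases with
    | left i => simpa using mul_nonneg ha (ht0 i)
    | right j => simpa using mul_nonneg hb (hs0 j)
  · simp [Fin.sum_univ_add, ← Finset.mul_sum, ht1, hs1, hab]
  · simp [Fin.sum_univ_add, Finset.smul_sum, smul_smul]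
  · simp [Fin.sum_univ_add, Finset.mul_sum, mul_assoc]

theorem ConvexOn.le_of_mem_convexCombValues (hg : ConvexOn ℝ univ g) (hgΦ : ∀ z, g z ≤ Φ z)
    {y : ℝ} (hy : y ∈ convexCombValues Φ A) : g A ≤ y := by
  obtain ⟨n, t, x, ht0, ht1, rfl, rfl⟩ := hy
  calc g (∑ i, t i • x i) ≤ ∑ i, t i * g (x i) := by
        simpa using hg.map_sum_le (fun i _ => ht0 i) ht1 fun i _ => mem_univ (x i)
    _ ≤ ∑ i, t i * Φ (x i) :=
        Finset.sum_le_sum fun i _ => mul_le_mul_of_nonneg_left (hgΦ (x i)) (ht0 i)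

theorem ConvexOn.le_convexCombInf (hg : ConvexOn ℝ univ g) (hgΦ : ∀ z, g z ≤ Φ z) (A : E) :
    g A ≤ convexCombInf Φ A :=
  le_csInf ⟨_, apply_mem_convexCombValues Φ A⟩ fun _ => hg.le_of_mem_convexCombValues hgΦ

theorem bddBelow_convexCombValues (hΦ : BddBelow (range Φ)) (A : E) :
    BddBelow (convexCombValues Φ A) := by
  obtain ⟨c, hc⟩ := hΦ
  exact ⟨c, fun y hy => (convexOn_const c convex_univ).le_of_mem_convexCombValues
    (fun z => hc ⟨z, rfl⟩) hy⟩

theorem convexCombInf_le (hΦ : BddBelow (range Φ)) (A : E) : convexCombInf Φ A ≤ Φ A :=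
  csInf_le (bddBelow_convexCombValues hΦ A) (apply_mem_convexCombValues Φ A)

theorem convexOn_convexCombInf (hΦ : BddBelow (range Φ)) :
    ConvexOn ℝ univ (convexCombInf Φ) := by
  refine ⟨convex_univ, fun A _ B _ a b ha hb hab => ?_⟩
  simp only [smul_eq_mul]
  refine le_of_forall_pos_le_add fun ε hε => ?_
  obtain ⟨y, hy, hyA⟩ := Real.lt_sInf_add_pos ⟨_, apply_mem_convexCombValues Φ A⟩ hε
  obtain ⟨z, hz, hzB⟩ := Real.lt_sInf_add_pos ⟨_, apply_mem_convexCombValues Φ B⟩ hε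
  calc convexCombInf Φ (a • A + b • B) ≤ a * y + b * z :=
        csInf_le (bddBelow_convexCombValues hΦ _)
          (smul_add_smul_mem_convexCombValues hy hz ha hb hab)
    _ ≤ a * (convexCombInf Φ A + ε) + b * (convexCombInf Φ B + ε) :=
        add_le_add (mul_le_mul_of_nonneg_left hyA.le ha) (mul_le_mul_of_nonneg_left hzB.le hb)
    _ = a * convexCombInf Φ A + b * convexCombInf Φ B + ε := by linear_combination ε * hab

end ConvexCombination

theorem convexEnvelope_eq_convexCombInf {N : ℕ} {Φ : EuclideanSpace ℝ (Fin N) → ℝ}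
    (hΦ : BddBelow (range Φ)) : convexEnvelope Φ = convexCombInf Φ := by
  funext A
  refine IsGreatest.csSup_eq ⟨⟨_, convexOn_convexCombInf hΦ, convexCombInf_le hΦ, rfl⟩, ?_⟩
  rintro _ ⟨g, hg, hgΦ, rfl⟩
  exact hg.le_convexCombInf hgΦ A

section Coercive

variable {E : Type*} [NormedAddCommGroup E] {Φ : E → ℝ} {lam m ε : ℝ}

theorem bddBelow_range_of_coercive (hlam : 0 ≤ lam) (hlow : ∀ z, lam * ‖z‖ - 1 ≤ Φ z) :
    BddBelow (range Φ) :=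
  ⟨-1, by
    rintro _ ⟨z, rfl⟩
    linarith [hlow z, mul_nonneg hlam (norm_nonneg z)]⟩

variable [NormedSpace ℝ E] {l l' : E →L[ℝ] ℝ} {A : E}

theorem exists_lt_of_convexCombInf_le (hlam : 0 < lam) (hlow : ∀ z, lam * ‖z‖ - 1 ≤ Φ z)
    (hm : ∀ z, m + l z ≤ Φ z) (hA : convexCombInf Φ A ≤ m + l A) (hε : 0 < ε) (hε1 : ε ≤ 1) :
    ∃ z ∈ Metric.closedBall 0 (2 * ((Φ A + 2) / lam)), Φ z < m + l z + ε := by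
  have hbdd := bddBelow_range_of_coercive hlam.le hlow
  obtain ⟨_, ⟨n, t, x, ht0, ht1, hx, rfl⟩, hlt⟩ :=
    Real.lt_sInf_add_pos ⟨_, apply_mem_convexCombValues Φ A⟩ (half_pos hε)
  change _ < convexCombInf Φ A + ε / 2 at hlt
  have hcgA := convexCombInf_le hbdd A
  set R := (Φ A + 2) / lam
  have hR : 0 < R :=
    div_pos (by linarith [hlow A, mul_nonneg hlam.le (norm_nonneg A)]) hlam
  have hexcess : ∑ i, t i * (Φ (x i) - m - l (x i)) < ε / 2 := by
    have hl : ∑ i, t i * l (x i) = l A := by simp [← hx, map_sum, map_smul]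
    simp only [mul_sub, Finset.sum_sub_distrib, ← Finset.sum_mul, ht1, hl]
    linarith
  have hmoment : ∑ i, t i * ‖x i‖ ≤ R := by
    rw [le_div_iff₀ hlam, Finset.sum_mul]
    calc ∑ i, t i * ‖x i‖ * lam ≤ ∑ i, t i * (Φ (x i) + 1) :=
          Finset.sum_le_sum fun i _ => by
            rw [mul_assoc]
            exact mul_le_mul_of_nonneg_left (by linarith [hlow (x i)]) (ht0 i)
      _ ≤ Φ A + 2 := by
          simp only [mul_add, Finset.sum_add_distrib, mul_one, ht1]
          linarith
  -- Markov: the weights of the points with `‖xᵢ‖ ≥ 2R` or with excess `≥ ε` add up to less than 1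
  have hsum : ∑ i, t i * (‖x i‖ / (2 * R) + (Φ (x i) - m - l (x i)) / ε) < ∑ i, t i * 1 := by
    simp only [mul_add, Finset.sum_add_distrib, ← mul_div_assoc, ← Finset.sum_div, mul_one, ht1]
    rw [div_add_div _ _ (by positivity) hε.ne', div_lt_one (by positivity)]
    nlinarith
  obtain ⟨i, -, hi⟩ := Finset.exists_lt_of_sum_lt hsum
  have hi := lt_of_mul_lt_mul_left hi (ht0 i)
  have he : 0 ≤ (Φ (x i) - m - l (x i)) / ε := div_nonneg (by linarith [hm (x i)]) hε.le
  have ha : 0 ≤ ‖x i‖ / (2 * R) := by positivity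
  refine ⟨x i, mem_closedBall_zero_iff.2 ?_, ?_⟩
  · exact (div_le_one (by positivity)).1 (by linarith)
  · have := (div_lt_one hε).1 (by linarith : (Φ (x i) - m - l (x i)) / ε < 1)
    linarith

theorem exists_apply_eq_of_convexCombInf_le [ProperSpace E] (hlam : 0 < lam)
    (hlow : ∀ z, lam * ‖z‖ - 1 ≤ Φ z) (hΦ : Continuous Φ) (hm : ∀ z, m + l z ≤ Φ z)
    (hA : convexCombInf Φ A ≤ m + l A) : ∃ y, Φ y = m + l y := by
  obtain ⟨z₀, hz₀, -⟩ := exists_lt_of_convexCombInf_le hlam hlow hm hA one_pos le_rfl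
  obtain ⟨y, -, hy⟩ := (isCompact_closedBall (0 : E) _).exists_isMinOn ⟨z₀, hz₀⟩
    (hΦ.sub l.continuous).continuousOn
  refine ⟨y, le_antisymm (le_of_forall_pos_le_add fun ε hε => ?_) (hm y)⟩
  obtain ⟨z, hz, hzε⟩ :=
    exists_lt_of_convexCombInf_le hlam hlow hm hA (lt_min hε one_pos) (min_le_right ε 1)
  have : Φ y - l y ≤ Φ z - l z := hy hz
  linarith [min_le_left ε 1]

theorem hasSubgradientAt_convexCombInf_unique [FiniteDimensional ℝ E] (hlam : 0 < lam)
    (hlow : ∀ z, lam * ‖z‖ - 1 ≤ Φ z) (hΦ : Differentiable ℝ Φ)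
    (hl : HasSubgradientAt (convexCombInf Φ) l A)
    (hl' : HasSubgradientAt (convexCombInf Φ) l' A) : l = l' := by
  have hbdd := bddBelow_range_of_coercive hlam.le hlow
  set f := convexCombInf Φ
  have hfΦ := convexCombInf_le hbdd
  set r := (2⁻¹ : ℝ) • l + (2⁻¹ : ℝ) • l'
  have hr : HasSubgradientAt f r A := hl.smul_add_smul hl' (by norm_num) (by norm_num) (by norm_num)
  obtain ⟨y, hy⟩ := exists_apply_eq_of_convexCombInf_le (m := f A - r A) hlam hlow hΦ.continuous
    (fun z => by linarith [hr z, hfΦ z, map_sub r z A]) (by linarith)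
  have hry : f y = f A + r (y - A) := by linarith [hr y, hfΦ y, map_sub r y A]
  have hr_apply : r (y - A) = 2⁻¹ * l (y - A) + 2⁻¹ * l' (y - A) := rfl
  have hly : f y = f A + l (y - A) := by linarith [hl y, hl' y]
  have hl'y : f y = f A + l' (y - A) := by linarith [hl y, hl' y]
  have hfy : f y = Φ y := by linarith [hry, map_sub r y A]
  rw [(hl.of_apply_eq hly).eq_fderiv_of_le hfΦ hfy (hΦ y),
    (hl'.of_apply_eq hl'y).eq_fderiv_of_le hfΦ hfy (hΦ y)]

end Coercive

theorem convexEnvelope_convex_and_C1_general {N : ℕ} (lam : ℝ)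
    (hlam : 0 < lam)
    (Φ : EuclideanSpace ℝ (Fin N) → ℝ)
    (hC1 : ContDiff ℝ 1 Φ)
    (hlow : ∀ A, max (lam * ‖A‖ - 1) 0 ≤ Φ A) :
    ConvexOn ℝ Set.univ (convexEnvelope Φ) ∧
      ContDiff ℝ 1 (convexEnvelope Φ) := by
  have hbdd : BddBelow (range Φ) := ⟨0, by
    rintro _ ⟨A, rfl⟩
    exact (le_max_right _ _).trans (hlow A)⟩
  rw [convexEnvelope_eq_convexCombInf hbdd]
  have hconv := convexOn_convexCombInf hbdd
  exact ⟨hconv, hconv.contDiff_one_of_hasSubgradientAt_unique fun A l l' hl hl' =>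
    hasSubgradientAt_convexCombInf_unique hlam (fun A => (le_max_left _ _).trans (hlow A))
      (hC1.differentiable one_ne_zero) hl hl'⟩

/-- If `Φ ∈ C¹(ℝ^N)` satisfies `(λ|A| − 1)₊ ≤ Φ(A) ≤ Λ|A| + 1`, then its
convexification `Φ**` is convex and continuously differentiable. -/
theorem convexEnvelope_convex_and_C1 {N : ℕ} (lam Lam : ℝ)
    (hlam : 0 < lam) (hlL : lam ≤ Lam)
    (Φ : EuclideanSpace ℝ (Fin N) → ℝ)
    (hC1 : ContDiff ℝ 1 Φ)
    (hlow : ∀ A, max (lam * ‖A‖ - 1) 0 ≤ Φ A)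
    (hup : ∀ A, Φ A ≤ Lam * ‖A‖ + 1) :
    ConvexOn ℝ Set.univ (convexEnvelope Φ) ∧
      ContDiff ℝ 1 (convexEnvelope Φ) :=
  convexEnvelope_convex_and_C1_general lam hlam Φ hC1 hlow
end
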